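/- Let ε > 0 and c > 1 be real numbers. Let P_v_tm, P_v_tn, P_tm, P_tn, P_v be positive real numbers (interpreted as the query likelihoods P(v⁽ᵐ⁾|t⁽ᵐ⁾), P(v⁽ᵐ⁾|t⁽ⁿ⁾), the candidate priors P(t⁽ᵐ⁾), P(t⁽ⁿ⁾), and the query prior P(v⁽ᵐ⁾)), and define the candidate likelihoods via Bayes' rule as P_tm_v = P_v_tm * P_tm / P_v and P_tn_v = P_v_tn * P_tn / P_v. Suppose (1) 0 < Real.log P_v_tm - Real.log P_v_tn < ε, and (2) Real.log P_tn - Real.log P_tm > c * ε. Then the candidate likelihood ranking is reversed: P_tm_v < P_tn_v. -/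
import Mathlib

/-- Proposition 1: candidate prior bias reverses the candidate likelihood ranking. -/
theorem candidate_likelihood_ranking_reversed
    (ε c P_v_tm P_v_tn P_tm P_tn P_v P_tm_v P_tn_v : ℝ)
    (hε : 0 < ε) (hc : 1 < c)
    (hP_v_tm : 0 < P_v_tm) (hP_v_tn : 0 < P_v_tn)
    (hP_tm : 0 < P_tm) (hP_tn : 0 < P_tn) (hP_v : 0 < P_v)
    (hBayes_m : P_tm_v = P_v_tm * P_tm / P_v)
    (hBayes_n : P_tn_v = P_v_tn * P_tn / P_v)
    (hquery_pos : 0 < Real.log P_v_tm - Real.log P_v_tn)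
    (hquery_lt : Real.log P_v_tm - Real.log P_v_tn < ε)
    (hprior : Real.log P_tn - Real.log P_tm > c * ε) :
    P_tm_v < P_tn_v := by
  have hcε : ε < c * ε := by nlinarith
  have hlog : Real.log (P_v_tm * P_tm) < Real.log (P_v_tn * P_tn) := by
    rw [Real.log_mul hP_v_tm.ne' hP_tm.ne', Real.log_mul hP_v_tn.ne' hP_tn.ne']
    linarith
  have := (Real.log_lt_log_iff (by positivity) (by positivity)).mp hlog
  rw [hBayes_m, hBayes_n]
  exact div_lt_div_of_pos_right this hP_v
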